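/- arXiv:1905.07603 — 2 statements merged into one kernel-verified Lean document; each statement's English description precedes it below -/
import Mathlib

section
/- The fixed-point set of the automorphism τ̂ of Ĥ_4 equals the subspace spanned by (a+b)⊗t^{2m} for m ∈ ℤ, (a-b)⊗t^{2m+1}, c⊗t^{2m+1}, d⊗t^{2m+1} for m ∈ ℤ, together with k, and this fixed-point set is a Lie subalgebra of Ĥ_4. -/
/-- The values of the twist `τ̂` on the basis of the affine Nappi-Witten algebra
`Ĥ₄ = H₄ ⊗ ℂ[t,t⁻¹] ⊕ ℂk`: the index `Sum.inl (0,n), …, Sum.inl (3,n)` corresponds to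
`a⊗tⁿ, b⊗tⁿ, c⊗tⁿ, d⊗tⁿ`, and `Sum.inr ()` to `k`; then
`τ̂(h⊗tᵐ + s·k) = (-1)ᵐ τ(h)⊗tᵐ + s·k`, where `τ(a)=b, τ(b)=a, τ(c)=-c, τ(d)=-d`. -/
noncomputable def tauHatValues {L : Type} [AddCommGroup L] [Module ℂ L]
    (a b c d : ℤ → L) (k : L) : (Fin 4 × ℤ) ⊕ Unit → L :=
  Sum.elim (fun p => (-1 : ℂ) ^ p.2 • (![b p.2, a p.2, -(c p.2), -(d p.2)] p.1))
    (fun _ => k)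

/-- The spanning set of the twisted affine Nappi-Witten algebra `Ĥ₄[τ]`:
`(a+b)⊗t^{2m}`, `(a-b)⊗t^{2m+1}`, `c⊗t^{2m+1}`, `d⊗t^{2m+1}` (`m ∈ ℤ`), and `k`. -/
def twistedNWSet {L : Type} (a b c d : ℤ → L) (k : L) [AddCommGroup L] : Set L :=
  Set.range (fun m : ℤ => a (2 * m) + b (2 * m)) ∪
  Set.range (fun m : ℤ => a (2 * m + 1) - b (2 * m + 1)) ∪
  Set.range (fun m : ℤ => c (2 * m + 1)) ∪
  Set.range (fun m : ℤ => d (2 * m + 1)) ∪ {k}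

/-!
Every basis vector `u` satisfies `u + τ̂ u ∈ span S`, where `S` is the twisted spanning set, and
every element of `S` is fixed by `τ̂`. Since `2` is invertible, a fixed vector `x = ½ (x + τ̂ x)`
therefore lies in `span S`, and conversely the fixed vectors form a submodule containing `S`.
For closure under the bracket it suffices to bracket elements of `S`: the defining relations
express each such bracket as a multiple of a generator of mode index `m + n`, whose parity is the
sum of the parities, plus a multiple of the central element `k ∈ S`.
-/

open Submodule

theorem setOf_apply_eq_self_eq_span {R V ι : Type*} [Semiring R] [Invertible (2 : R)]
    [AddCommMonoid V] [Module R V] (v : Module.Basis ι R V) (T : V →ₗ[R] V) {s : Set V}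
    (hs : ∀ x ∈ s, T x = x) (hv : ∀ i, v i + T (v i) ∈ span R s) :
    {x | T x = x} = span R s := by
  refine Set.Subset.antisymm (fun x (hx : T x = x) => ?_) (fun x hx => ?_)
  · have hsum : span R (Set.range v) ≤ (span R s).comap (LinearMap.id + T) :=
      span_le.2 (Set.range_subset_iff.2 hv)
    rw [v.span_eq] at hsum
    have hxx : x + x ∈ span R s := by simpa [hx] using hsum (mem_top (x := x))
    rw [← invOf_two_smul_add_invOf_two_smul R x, ← smul_add]
    exact smul_mem _ _ hxx
  · exact (span_le (p := LinearMap.eqLocus T LinearMap.id)).2 hs hx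

theorem lie_mem_span_of_forall_lie_mem {R L : Type*} [CommRing R] [LieRing L] [LieAlgebra R L]
    {s : Set L} (hs : ∀ x ∈ s, ∀ y ∈ s, ⁅x, y⁆ ∈ span R s) {x y : L} (hx : x ∈ span R s)
    (hy : y ∈ span R s) : ⁅x, y⁆ ∈ span R s := by
  induction hx, hy using span_induction₂ with
  | mem_mem x y hx hy => exact hs x hx y hy
  | zero_left y hy => simp
  | zero_right x hx => simp
  | add_left x y z _ _ _ hx hy => simpa [add_lie] using add_mem hx hy
  | add_right x y z _ _ _ hx hy => simpa [lie_add] using add_mem hx hy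
  | smul_left r x y _ _ h => simpa [smul_lie] using smul_mem _ r h
  | smul_right r x y _ _ h => simpa [lie_smul] using smul_mem _ r h

structure IsAffineNappiWitten {L : Type*} [LieRing L] [LieAlgebra ℂ L] (a b c d : ℤ → L) (k : L) :
    Prop where
  lie_a_b : ∀ m n : ℤ, ⁅a m, b n⁆ = c (m + n) + (if m + n = 0 then (m : ℂ) else 0) • k
  lie_a_a : ∀ m n : ℤ, ⁅a m, a n⁆ = 0
  lie_b_b : ∀ m n : ℤ, ⁅b m, b n⁆ = 0
  lie_d_a : ∀ m n : ℤ, ⁅d m, a n⁆ = a (m + n)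
  lie_d_b : ∀ m n : ℤ, ⁅d m, b n⁆ = -b (m + n)
  lie_d_d : ∀ m n : ℤ, ⁅d m, d n⁆ = 0
  lie_c_d : ∀ m n : ℤ, ⁅c m, d n⁆ = (if m + n = 0 then (m : ℂ) else 0) • k
  lie_c_a : ∀ m n : ℤ, ⁅c m, a n⁆ = 0
  lie_c_b : ∀ m n : ℤ, ⁅c m, b n⁆ = 0
  lie_c_c : ∀ m n : ℤ, ⁅c m, c n⁆ = 0
  lie_k : ∀ x : L, ⁅k, x⁆ = 0

section Span

variable {L : Type} {R : Type*} [Semiring R] [AddCommGroup L] [Module R L] {a b c d : ℤ → L}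
  {k : L}

theorem k_mem_span_twistedNWSet : k ∈ span R (twistedNWSet a b c d k) :=
  subset_span (by simp [twistedNWSet])

theorem add_mem_span_twistedNWSet {n : ℤ} (hn : Even n) :
    a n + b n ∈ span R (twistedNWSet a b c d k) := by
  obtain ⟨m, rfl⟩ := even_iff_two_dvd.1 hn
  exact subset_span (by simp [twistedNWSet])

theorem sub_mem_span_twistedNWSet {n : ℤ} (hn : Odd n) :
    a n - b n ∈ span R (twistedNWSet a b c d k) := by
  obtain ⟨m, rfl⟩ := hn
  exact subset_span (by simp [twistedNWSet])

theorem c_mem_span_twistedNWSet {n : ℤ} (hn : Odd n) :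
    c n ∈ span R (twistedNWSet a b c d k) := by
  obtain ⟨m, rfl⟩ := hn
  exact subset_span (by simp [twistedNWSet])

theorem d_mem_span_twistedNWSet {n : ℤ} (hn : Odd n) :
    d n ∈ span R (twistedNWSet a b c d k) := by
  obtain ⟨m, rfl⟩ := hn
  exact subset_span (by simp [twistedNWSet])

end Span

namespace IsAffineNappiWitten

variable {L : Type} [LieRing L] [LieAlgebra ℂ L] {a b c d : ℤ → L} {k : L}

theorem lie_b_a (h : IsAffineNappiWitten a b c d k) (m n : ℤ) :
    ⁅b m, a n⁆ = -c (m + n) - (if m + n = 0 then (n : ℂ) else 0) • k := by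
  rw [← lie_skew, h.lie_a_b, add_comm n m]
  abel

theorem lie_add_add (h : IsAffineNappiWitten a b c d k) (m n : ℤ) :
    ⁅a m + b m, a n + b n⁆ = (if m + n = 0 then (m - n : ℂ) else 0) • k := by
  simp only [add_lie, lie_add, h.lie_a_a, h.lie_b_b, h.lie_a_b, h.lie_b_a]
  split_ifs <;> simp only [sub_smul, zero_smul] <;> abel

theorem lie_add_sub (h : IsAffineNappiWitten a b c d k) (m n : ℤ) :
    ⁅a m + b m, a n - b n⁆ = -(2 : ℂ) • c (m + n) := by
  simp only [add_lie, lie_sub, h.lie_a_a, h.lie_b_b, h.lie_a_b, h.lie_b_a]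
  split_ifs with hmn
  · have hmn' : (m : ℂ) + n = 0 := by exact_mod_cast hmn
    linear_combination (norm := module) -hmn' • k
  · module

theorem lie_sub_sub (h : IsAffineNappiWitten a b c d k) (m n : ℤ) :
    ⁅a m - b m, a n - b n⁆ = (if m + n = 0 then (n - m : ℂ) else 0) • k := by
  simp only [sub_lie, lie_sub, h.lie_a_a, h.lie_b_b, h.lie_a_b, h.lie_b_a]
  split_ifs <;> simp only [sub_smul, zero_smul] <;> abel

theorem lie_c_add (h : IsAffineNappiWitten a b c d k) (m n : ℤ) : ⁅c m, a n + b n⁆ = 0 := by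
  rw [lie_add, h.lie_c_a, h.lie_c_b, add_zero]

theorem lie_c_sub (h : IsAffineNappiWitten a b c d k) (m n : ℤ) : ⁅c m, a n - b n⁆ = 0 := by
  rw [lie_sub, h.lie_c_a, h.lie_c_b, sub_zero]

theorem lie_d_add (h : IsAffineNappiWitten a b c d k) (m n : ℤ) :
    ⁅d m, a n + b n⁆ = a (m + n) - b (m + n) := by
  rw [lie_add, h.lie_d_a, h.lie_d_b, sub_eq_add_neg]

theorem lie_d_sub (h : IsAffineNappiWitten a b c d k) (m n : ℤ) :
    ⁅d m, a n - b n⁆ = a (m + n) + b (m + n) := by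
  rw [lie_sub, h.lie_d_a, h.lie_d_b, sub_neg_eq_add]

theorem lie_mem_span_twistedNWSet (h : IsAffineNappiWitten a b c d k) :
    ∀ x ∈ twistedNWSet a b c d k, ∀ y ∈ twistedNWSet a b c d k,
      ⁅x, y⁆ ∈ span ℂ (twistedNWSet a b c d k) := by
  set M := span ℂ (twistedNWSet a b c d k)
  have hk : ∀ r : ℂ, r • k ∈ M := fun r => smul_mem _ r k_mem_span_twistedNWSet
  have swap : ∀ {x y : L}, ⁅y, x⁆ ∈ M → ⁅x, y⁆ ∈ M := fun hyx => by
    rw [← lie_skew]; exact neg_mem hyx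
  have lie_k_right : ∀ x : L, ⁅x, k⁆ ∈ M := fun x => swap (by rw [h.lie_k]; exact zero_mem _)
  intro x hx y hy
  simp only [twistedNWSet, Set.mem_union, Set.mem_range, Set.mem_singleton_iff] at hx hy
  have even := even_two_mul (α := ℤ)
  have odd := odd_two_mul_add_one (α := ℤ)
  rcases hx with ((((⟨m, rfl⟩ | ⟨m, rfl⟩) | ⟨m, rfl⟩) | ⟨m, rfl⟩) | rfl)
  on_goal 5 => rw [h.lie_k]; exact zero_mem _
  all_goals rcases hy with ((((⟨n, rfl⟩ | ⟨n, rfl⟩) | ⟨n, rfl⟩) | ⟨n, rfl⟩) | rfl)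
  · rw [h.lie_add_add]; exact hk _
  · rw [h.lie_add_sub]; exact smul_mem _ _ (c_mem_span_twistedNWSet ((even m).add_odd (odd n)))
  · exact swap (by rw [h.lie_c_add]; exact zero_mem _)
  · exact swap (by rw [h.lie_d_add]; exact sub_mem_span_twistedNWSet ((odd n).add_even (even m)))
  · exact lie_k_right _
  · exact swap (by
      rw [h.lie_add_sub]; exact smul_mem _ _ (c_mem_span_twistedNWSet ((even n).add_odd (odd m))))
  · rw [h.lie_sub_sub]; exact hk _
  · exact swap (by rw [h.lie_c_sub]; exact zero_mem _)
  · exact swap (by rw [h.lie_d_sub]; exact add_mem_span_twistedNWSet ((odd n).add_odd (odd m)))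
  · exact lie_k_right _
  · rw [h.lie_c_add]; exact zero_mem _
  · rw [h.lie_c_sub]; exact zero_mem _
  · rw [h.lie_c_c]; exact zero_mem _
  · rw [h.lie_c_d]; exact hk _
  · exact lie_k_right _
  · rw [h.lie_d_add]; exact sub_mem_span_twistedNWSet ((odd m).add_even (even n))
  · rw [h.lie_d_sub]; exact add_mem_span_twistedNWSet ((odd m).add_odd (odd n))
  · exact swap (by rw [h.lie_c_d]; exact hk _)
  · rw [h.lie_d_d]; exact zero_mem _
  · exact lie_k_right _

end IsAffineNappiWitten

section TauHat

variable {L : Type} [AddCommGroup L] [Module ℂ L] (v : Module.Basis ((Fin 4 × ℤ) ⊕ Unit) ℂ L)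
  {a b c d : ℤ → L} {k : L}

theorem basis_add_constr_tauHatValues_mem_span (hva : ∀ n : ℤ, v (Sum.inl (0, n)) = a n)
    (hvb : ∀ n : ℤ, v (Sum.inl (1, n)) = b n) (hvc : ∀ n : ℤ, v (Sum.inl (2, n)) = c n)
    (hvd : ∀ n : ℤ, v (Sum.inl (3, n)) = d n) (hvk : v (Sum.inr ()) = k) (i : (Fin 4 × ℤ) ⊕ Unit) :
    v i + v.constr ℂ (tauHatValues a b c d k) (v i) ∈ span ℂ (twistedNWSet a b c d k) := by
  rw [Module.Basis.constr_basis]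
  rcases i with ⟨p, n⟩ | ⟨⟩
  · fin_cases p <;> rcases Int.even_or_odd n with hn | hn <;>
      simp only [Fin.zero_eta, Fin.mk_one, Fin.reduceFinMk, Fin.isValue, hva, hvb, hvc, hvd,
        tauHatValues, Sum.elim_inl, hn.neg_one_zpow, Matrix.cons_val_zero, Matrix.cons_val_one,
        Matrix.cons_val, smul_neg, neg_smul, one_smul, add_neg_cancel, neg_neg, zero_mem]
    · exact add_mem_span_twistedNWSet hn
    · rw [← sub_eq_add_neg]; exact sub_mem_span_twistedNWSet hn
    · rw [add_comm]; exact add_mem_span_twistedNWSet hn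
    · rw [← sub_eq_add_neg, ← neg_sub]; exact neg_mem (sub_mem_span_twistedNWSet hn)
    · exact add_mem (c_mem_span_twistedNWSet hn) (c_mem_span_twistedNWSet hn)
    · exact add_mem (d_mem_span_twistedNWSet hn) (d_mem_span_twistedNWSet hn)
  · simpa [tauHatValues, hvk, ← two_smul ℂ] using smul_mem _ (2 : ℂ) k_mem_span_twistedNWSet

theorem constr_tauHatValues_apply_of_mem (hva : ∀ n : ℤ, v (Sum.inl (0, n)) = a n)
    (hvb : ∀ n : ℤ, v (Sum.inl (1, n)) = b n) (hvc : ∀ n : ℤ, v (Sum.inl (2, n)) = c n)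
    (hvd : ∀ n : ℤ, v (Sum.inl (3, n)) = d n) (hvk : v (Sum.inr ()) = k) :
    ∀ x ∈ twistedNWSet a b c d k, v.constr ℂ (tauHatValues a b c d k) x = x := by
  set T := v.constr ℂ (tauHatValues a b c d k)
  have hTa (n : ℤ) : T (a n) = (-1 : ℂ) ^ n • b n := by
    rw [← hva, v.constr_basis]; simp [tauHatValues]
  have hTb (n : ℤ) : T (b n) = (-1 : ℂ) ^ n • a n := by
    rw [← hvb, v.constr_basis]; simp [tauHatValues]
  have hTc (n : ℤ) : T (c n) = -((-1 : ℂ) ^ n • c n) := by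
    rw [← hvc, v.constr_basis]; simp [tauHatValues, hvc]
  have hTd (n : ℤ) : T (d n) = -((-1 : ℂ) ^ n • d n) := by
    rw [← hvd, v.constr_basis]; simp [tauHatValues, hvd]
  have hTk : T k = k := by rw [← hvk, v.constr_basis]; simp [tauHatValues, hvk]
  intro x hx
  simp only [twistedNWSet, Set.mem_union, Set.mem_range, Set.mem_singleton_iff] at hx
  rcases hx with ((((⟨m, rfl⟩ | ⟨m, rfl⟩) | ⟨m, rfl⟩) | ⟨m, rfl⟩) | rfl)
  · rw [map_add, hTa, hTb, (even_two_mul m).neg_one_zpow, one_smul, one_smul, add_comm]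
  · rw [map_sub, hTa, hTb, (odd_two_mul_add_one m).neg_one_zpow, neg_one_smul, neg_one_smul,
      neg_sub_neg]
  · rw [hTc, (odd_two_mul_add_one m).neg_one_zpow, neg_one_smul, neg_neg]
  · rw [hTd, (odd_two_mul_add_one m).neg_one_zpow, neg_one_smul, neg_neg]
  · exact hTk

end TauHat

/-- The fixed-point set of the automorphism `τ̂` of `Ĥ₄` equals the span of
`(a+b)⊗t^{2m}`, `(a-b)⊗t^{2m+1}`, `c⊗t^{2m+1}`, `d⊗t^{2m+1}` (`m ∈ ℤ`) and `k`,
and this fixed-point set is a Lie subalgebra of `Ĥ₄` (closed under the bracket). -/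
theorem tauHat_fixed_points (L : Type) [LieRing L] [LieAlgebra ℂ L]
    (v : Module.Basis ((Fin 4 × ℤ) ⊕ Unit) ℂ L)
    (a b c d : ℤ → L) (k : L)
    (hva : ∀ n : ℤ, v (Sum.inl (0, n)) = a n)
    (hvb : ∀ n : ℤ, v (Sum.inl (1, n)) = b n)
    (hvc : ∀ n : ℤ, v (Sum.inl (2, n)) = c n)
    (hvd : ∀ n : ℤ, v (Sum.inl (3, n)) = d n)
    (hvk : v (Sum.inr ()) = k)
    (hab : ∀ m n : ℤ, ⁅a m, b n⁆ = c (m + n) + (if m + n = 0 then (m : ℂ) else 0) • k)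
    (haa : ∀ m n : ℤ, ⁅a m, a n⁆ = 0)
    (hbb : ∀ m n : ℤ, ⁅b m, b n⁆ = 0)
    (hda : ∀ m n : ℤ, ⁅d m, a n⁆ = a (m + n))
    (hdb : ∀ m n : ℤ, ⁅d m, b n⁆ = -b (m + n))
    (hdd : ∀ m n : ℤ, ⁅d m, d n⁆ = 0)
    (hcd : ∀ m n : ℤ, ⁅c m, d n⁆ = (if m + n = 0 then (m : ℂ) else 0) • k)
    (hca : ∀ m n : ℤ, ⁅c m, a n⁆ = 0)
    (hcb : ∀ m n : ℤ, ⁅c m, b n⁆ = 0)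
    (hcc : ∀ m n : ℤ, ⁅c m, c n⁆ = 0)
    (hk : ∀ x : L, ⁅k, x⁆ = 0) :
    ({x : L | Module.Basis.constr v ℂ (tauHatValues a b c d k) x = x} =
      (Submodule.span ℂ (twistedNWSet a b c d k) : Set L)) ∧
    (∀ x ∈ Submodule.span ℂ (twistedNWSet a b c d k),
      ∀ y ∈ Submodule.span ℂ (twistedNWSet a b c d k),
        ⁅x, y⁆ ∈ Submodule.span ℂ (twistedNWSet a b c d k)) := by
  have h : IsAffineNappiWitten a b c d k :=
    ⟨hab, haa, hbb, hda, hdb, hdd, hcd, hca, hcb, hcc, hk⟩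
  exact ⟨setOf_apply_eq_self_eq_span v _ (constr_tauHatValues_apply_of_mem v hva hvb hvc hvd hvk)
    (basis_add_constr_tauHatValues_mem_span v hva hvb hvc hvd hvk),
    fun _ hx _ hy => lie_mem_span_of_forall_lie_mem h.lie_mem_span_twistedNWSet hx hy⟩
end

section
/- Let g be a complex Lie algebra and n a quasi-nilpotent subalgebra (⋂_k n^k = 0 for the lower central series) such that ad(n) acts locally nilpotently on g/n. If V is a g-module generated by a Whittaker vector of type ψ (a Lie algebra homomorphism ψ: n → ℂ), then x - ψ(x) acts locally nilpotently on V for every x ∈ n. -/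
/-!
Let `K s` be the vectors killed by every product of `s` operators `x - ψ x` with `x ∈ n`.
The union of the `K s` contains the Whittaker vector, so it is all of `V` once it is shown
to be a `g`-submodule. This follows from `(x - ψ x) ⁅y, u⁆ = ⁅y, (x - ψ x) u⁆ + ⁅⁅x, y⁆, u⁆`
by a double induction, on the number `t` of brackets with elements of `n` that push `y` into
`n` and on `s`: it yields a bound `m`, depending on `t` and `s` but not on `y`, with
`⁅y, K s⁆ ⊆ K m`.
-/

namespace Whittaker

variable {R L M : Type*} [CommRing R] [LieRing L] [LieAlgebra R L] {n : LieSubalgebra R L}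
  [AddCommGroup M] [Module R M] [LieRingModule L M] [LieModule R L M]

variable (n) in
def adFiltration : ℕ → Submodule R L
  | 0 => n.toSubmodule
  | t + 1 => ⨅ x : n, (adFiltration t).comap (LieModule.toEnd R L L x)

lemma mem_adFiltration_succ {t : ℕ} {y : L} :
    y ∈ adFiltration n (t + 1) ↔ ∀ x : n, ⁅(x : L), y⁆ ∈ adFiltration n t := by
  simp [adFiltration, Submodule.mem_iInf]

lemma mem_adFiltration_iff {t : ℕ} {y : L} :
    y ∈ adFiltration n t ↔
      ∀ z : Fin t → n, (List.ofFn z).foldr (fun a w => ⁅(a : L), w⁆) y ∈ n := by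
  induction t generalizing y with
  | zero => simp [adFiltration]
  | succ t ih =>
    simp only [mem_adFiltration_succ, ih, ← (Fin.snocEquiv _).forall_congr_right,
      Prod.forall, Fin.snocEquiv_apply, List.ofFn_succ', Fin.snoc_castSucc, Fin.snoc_last]
    simp [List.concat_eq_append, List.foldr_append]

variable (ψ : n →ₗ[R] R)

def whittakerOp (x : n) : Module.End R M :=
  LieModule.toEnd R L M x - ψ x • 1

lemma whittakerOp_apply (x : n) (u : M) : whittakerOp ψ x u = ⁅(x : L), u⁆ - ψ x • u := by
  simp only [whittakerOp, LinearMap.sub_apply, LinearMap.smul_apply, Module.End.one_apply,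
    LieModule.toEnd_apply_apply]

lemma whittakerOp_lie (x : n) (y : L) (u : M) :
    whittakerOp ψ x ⁅y, u⁆ = ⁅y, whittakerOp ψ x u⁆ + ⁅⁅(x : L), y⁆, u⁆ := by
  simp only [whittakerOp_apply, lie_sub, lie_smul]
  rw [leibniz_lie]
  abel

variable (M) in
def whittakerFiltration : ℕ → Submodule R M
  | 0 => ⊥
  | s + 1 => ⨅ x : n, (whittakerFiltration s).comap (whittakerOp ψ x)

variable {ψ}

lemma mem_whittakerFiltration_succ {s : ℕ} {u : M} :
    u ∈ whittakerFiltration M ψ (s + 1) ↔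
      ∀ x : n, whittakerOp ψ x u ∈ whittakerFiltration M ψ s := by
  simp [whittakerFiltration, Submodule.mem_iInf]

lemma whittakerFiltration_le_succ (s : ℕ) :
    whittakerFiltration M ψ s ≤ whittakerFiltration M ψ (s + 1) := by
  induction s with
  | zero => exact bot_le
  | succ s ih =>
    exact fun u hu => mem_whittakerFiltration_succ.mpr fun x =>
      ih (mem_whittakerFiltration_succ.mp hu x)

lemma whittakerFiltration_mono : Monotone (whittakerFiltration M ψ) :=
  monotone_nat_of_le_succ whittakerFiltration_le_succ

lemma whittakerOp_mem_whittakerFiltration {s : ℕ} {u : M} (hu : u ∈ whittakerFiltration M ψ s)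
    (x : n) : whittakerOp ψ x u ∈ whittakerFiltration M ψ s :=
  mem_whittakerFiltration_succ.mp (whittakerFiltration_le_succ s hu) x

lemma iterate_whittakerOp_eq_zero {s : ℕ} {u : M} (hu : u ∈ whittakerFiltration M ψ s)
    (x : n) :
    (whittakerOp ψ x)^[s] u = 0 := by
  induction s generalizing u with
  | zero => simpa [whittakerFiltration] using hu
  | succ s ih => exact ih (mem_whittakerFiltration_succ.mp hu x)

lemma exists_lie_mem_whittakerFiltration (t s : ℕ) : ∃ m, ∀ y ∈ adFiltration n t,
    ∀ u ∈ whittakerFiltration M ψ s, ⁅y, u⁆ ∈ whittakerFiltration M ψ m := by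
  induction t generalizing s with
  | zero =>
    refine ⟨s, fun y hy u hu => ?_⟩
    have hdecomp : ⁅y, u⁆ = whittakerOp ψ ⟨y, hy⟩ u + ψ ⟨y, hy⟩ • u := by
      rw [whittakerOp_apply]; abel
    rw [hdecomp]
    exact add_mem (whittakerOp_mem_whittakerFiltration hu _) (Submodule.smul_mem _ _ hu)
  | succ t iht =>
    induction s with
    | zero => exact ⟨0, fun y _ u hu => by simp_all [whittakerFiltration]⟩
    | succ s ihs =>
      obtain ⟨m₁, hm₁⟩ := ihs
      obtain ⟨m₂, hm₂⟩ := iht (s + 1)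
      refine ⟨max m₁ m₂ + 1, fun y hy u hu => mem_whittakerFiltration_succ.mpr fun x => ?_⟩
      rw [whittakerOp_lie]
      exact add_mem
        (whittakerFiltration_mono (le_max_left _ _)
          (hm₁ y hy _ (mem_whittakerFiltration_succ.mp hu x)))
        (whittakerFiltration_mono (le_max_right _ _)
          (hm₂ _ (mem_adFiltration_succ.mp hy x) u hu))

lemma mem_iSup_whittakerFiltration {u : M} :
    u ∈ ⨆ s, whittakerFiltration M ψ s ↔ ∃ s, u ∈ whittakerFiltration M ψ s :=
  Submodule.mem_iSup_of_directed _ whittakerFiltration_mono.directed_le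

variable (M ψ) in
def whittakerLocus (hn : ∀ y : L, ∃ t, y ∈ adFiltration n t) : LieSubmodule R L M where
  toSubmodule := ⨆ s, whittakerFiltration M ψ s
  lie_mem {y u} hu := by
    obtain ⟨s, hs⟩ := mem_iSup_whittakerFiltration.mp hu
    obtain ⟨t, ht⟩ := hn y
    obtain ⟨m, hm⟩ := exists_lie_mem_whittakerFiltration (M := M) (ψ := ψ) t s
    exact mem_iSup_whittakerFiltration.mpr ⟨m, hm y ht u hs⟩

lemma mem_whittakerFiltration_one {v : M} (hv : ∀ x : n, ⁅(x : L), v⁆ = ψ x • v) :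
    v ∈ whittakerFiltration M ψ 1 :=
  mem_whittakerFiltration_succ.mpr fun x => by simp [whittakerOp_apply, hv, whittakerFiltration]

end Whittaker

open Whittaker

theorem whittaker_locally_nilpotent_general (g : Type) [LieRing g] [LieAlgebra ℂ g]
    (n : LieSubalgebra ℂ g)
    (hloc : ∀ x : g, ∃ s : ℕ, ∀ y : Fin s → n,
      (List.ofFn y).foldr (fun a w => ⁅(a : g), w⁆) x ∈ n)
    (ψ : n →ₗ[ℂ] ℂ)
    (V : Type) [AddCommGroup V] [Module ℂ V] [LieRingModule g V] [LieModule ℂ g V]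
    (v : V)
    (hwh : ∀ x : n, ⁅(x : g), v⁆ = ψ x • v)
    (hgen : ∀ N : LieSubmodule ℂ g V, v ∈ N → N = ⊤) :
    ∀ x : n, ∀ u : V, ∃ s : ℕ,
      ((fun w : V => ⁅(x : g), w⁆ - ψ x • w)^[s]) u = 0 := by
  intro x u
  have hn : ∀ y : g, ∃ t, y ∈ adFiltration n t :=
    fun y => (hloc y).imp fun _ => mem_adFiltration_iff.mpr
  have htop : whittakerLocus V ψ hn = ⊤ :=
    hgen _ (mem_iSup_whittakerFiltration.mpr ⟨1, mem_whittakerFiltration_one hwh⟩)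
  obtain ⟨s, hs⟩ := mem_iSup_whittakerFiltration.mp (htop ▸ LieSubmodule.mem_top u)
  have hop : (fun w : V => ⁅(x : g), w⁆ - ψ x • w) = whittakerOp ψ x :=
    funext fun w => (whittakerOp_apply ψ x w).symm
  exact ⟨s, hop ▸ iterate_whittakerOp_eq_zero hs x⟩

/-- Let `g` be a complex Lie algebra and `n` a quasi-nilpotent Lie subalgebra
(the lower central series of `n` has trivial intersection) such that the adjoint
action of `n` on `g/n` is locally nilpotent (iterated brackets with elements of `n`
eventually land in `n`).  If `V` is a `g`-module generated by a Whittaker vector `v`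
of type `ψ` (a Lie algebra homomorphism `ψ : n → ℂ`), then `x - ψ(x)` acts locally
nilpotently on `V` for every `x ∈ n`. -/
theorem whittaker_locally_nilpotent (g : Type) [LieRing g] [LieAlgebra ℂ g]
    (n : LieSubalgebra ℂ g)
    (hquasi : (⨅ k : ℕ, LieModule.lowerCentralSeries ℂ n n k) = ⊥)
    (hloc : ∀ x : g, ∃ s : ℕ, ∀ y : Fin s → n,
      (List.ofFn y).foldr (fun a w => ⁅(a : g), w⁆) x ∈ n)
    (ψ : n →ₗ[ℂ] ℂ) (hψ : ∀ x y : n, ψ ⁅x, y⁆ = 0)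
    (V : Type) [AddCommGroup V] [Module ℂ V] [LieRingModule g V] [LieModule ℂ g V]
    (v : V) (hv : v ≠ 0)
    (hwh : ∀ x : n, ⁅(x : g), v⁆ = ψ x • v)
    (hgen : ∀ N : LieSubmodule ℂ g V, v ∈ N → N = ⊤) :
    ∀ x : n, ∀ u : V, ∃ s : ℕ,
      ((fun w : V => ⁅(x : g), w⁆ - ψ x • w)^[s]) u = 0 :=
  whittaker_locally_nilpotent_general g n hloc ψ V v hwh hgen
end
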